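/- Let 0 < r < 1 and let Ψ be an analytic map from U_r = {z ∈ ℂ : |z| > r} to invertible N×N complex matrices such that t ↦ Ψ(1/t) extends to an analytic function on {|t| < 1/r} whose value at t = 0 is invertible. Let g : U_r → ℂ^N be analytic such that t ↦ g(1/t) extends analytically to {|t| < 1/r} with value 0 at t = 0. Let G : U_r × U_r → Mat_N(ℂ) be the analytic extension of the kernel 𝖽(z,z') := (Ψ(z)Ψ(z')⁻¹ − 1)/(z − z'), with diagonal value G(z,z) = Ψ'(z)Ψ(z)⁻¹. Then for every z₀ with |z₀| = 1, the contour integral ∮_{|w|=1} G(z₀, w)·g(w) dw equals 0. -/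

import Mathlib

/-!
Substituting `w = 1/t` maps the unit circle to itself and turns the integrand into
`z₀⁻¹ K(t) / (t (t - 1/z₀))` with `K(t) = (Ψ(z₀) Ψ(1/t)⁻¹ - 1) g(1/t)`, which is analytic on the
disc of radius `1/r > 1`. `K` vanishes at `t = 0` because `g` vanishes at infinity, and at
`t = 1/z₀` because the numerator of the kernel vanishes on the diagonal; so both apparent poles
are removable and the integral vanishes by Cauchy's theorem.
-/

open Metric Set Matrix

section MatrixDifferentiability

variable {𝕜 : Type*} [NontriviallyNormedField 𝕜] {m n : Type*} [Fintype n] {s : Set 𝕜}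

theorem DifferentiableOn.matrix_mulVec {M : 𝕜 → Matrix m n 𝕜} {v : 𝕜 → n → 𝕜}
    (hM : ∀ i j, DifferentiableOn 𝕜 (fun t => M t i j) s) (hv : DifferentiableOn 𝕜 v s) :
    DifferentiableOn 𝕜 (fun t => M t *ᵥ v t) s :=
  differentiableOn_pi.2 fun i =>
    DifferentiableOn.fun_sum fun j _ => (hM i j).mul (differentiableOn_pi.1 hv j)

variable [DecidableEq n] {M : 𝕜 → Matrix n n 𝕜}

theorem DifferentiableOn.matrix_det (hM : ∀ i j, DifferentiableOn 𝕜 (fun t => M t i j) s) :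
    DifferentiableOn 𝕜 (fun t => (M t).det) s := by
  simp only [Matrix.det_apply']
  exact DifferentiableOn.fun_sum fun σ _ =>
    (differentiableOn_const _).mul (DifferentiableOn.fun_finsetProd fun i _ => hM (σ i) i)

theorem DifferentiableOn.matrix_adjugate (hM : ∀ i j, DifferentiableOn 𝕜 (fun t => M t i j) s)
    (i j : n) : DifferentiableOn 𝕜 (fun t => (M t).adjugate i j) s := by
  simp only [Matrix.adjugate_apply]
  refine DifferentiableOn.matrix_det fun k l => ?_
  rcases eq_or_ne k j with rfl | hk
  · simpa only [Matrix.updateRow_self] using differentiableOn_const _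
  · simpa only [Matrix.updateRow_ne hk] using hM k l

theorem DifferentiableOn.matrix_inv (hM : ∀ i j, DifferentiableOn 𝕜 (fun t => M t i j) s)
    (hunit : ∀ t ∈ s, IsUnit (M t)) (i j : n) :
    DifferentiableOn 𝕜 (fun t => (M t)⁻¹ i j) s := by
  simp only [Matrix.inv_def, Ring.inverse_eq_inv, Matrix.smul_apply, smul_eq_mul]
  exact ((DifferentiableOn.matrix_det hM).inv fun t ht =>
    ((Matrix.isUnit_iff_isUnit_det _).1 (hunit t ht)).ne_zero).mul
    (DifferentiableOn.matrix_adjugate hM i j)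

theorem DifferentiableOn.matrix_mul_inv_sub_one_mulVec (A : Matrix n n 𝕜) {v : 𝕜 → n → 𝕜}
    (hM : ∀ i j, DifferentiableOn 𝕜 (fun t => M t i j) s) (hunit : ∀ t ∈ s, IsUnit (M t))
    (hv : DifferentiableOn 𝕜 v s) :
    DifferentiableOn 𝕜 (fun t => (A * (M t)⁻¹ - 1) *ᵥ v t) s := by
  simp only [sub_mulVec, ← mulVec_mulVec, one_mulVec]
  exact (DifferentiableOn.matrix_mulVec (fun i j => differentiableOn_const (A i j))
    (DifferentiableOn.matrix_mulVec (DifferentiableOn.matrix_inv hM hunit) hv)).sub hv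

end MatrixDifferentiability

theorem dslope_dslope_of_ne {𝕜 E : Type*} [NontriviallyNormedField 𝕜] [NormedAddCommGroup E]
    [NormedSpace 𝕜 E] {f : 𝕜 → E} {a b t : 𝕜} (hab : a ≠ b) (hfa : f a = 0) (hfb : f b = 0)
    (hta : t ≠ a) (htb : t ≠ b) :
    dslope (dslope f a) b t = ((t - a) * (t - b))⁻¹ • f t := by
  rw [dslope_of_ne _ htb, slope_def_module, dslope_of_ne _ hta, dslope_of_ne _ hab.symm,
    slope_def_module, slope_def_module, hfa, hfb, sub_zero, sub_self, smul_zero, sub_zero,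
    smul_smul, mul_inv, mul_comm]

theorem lt_norm_inv_of_mem_ball {𝕜 : Type*} [NormedDivisionRing 𝕜] {r : ℝ} {t : 𝕜}
    (ht : t ∈ ball (0 : 𝕜) r⁻¹) (ht0 : t ≠ 0) : r < ‖t⁻¹‖ := by
  rw [mem_ball_zero_iff] at ht
  rw [norm_inv]
  have hr : 0 < r := inv_pos.1 ((norm_nonneg t).trans_lt ht)
  exact (lt_inv_comm₀ (norm_pos_iff.2 ht0) hr).1 ht

section CircleIntegral

variable {E : Type*} [NormedAddCommGroup E] [NormedSpace ℂ E]

theorem circleIntegral_congr_of_countable {f g : ℂ → E} {c : ℂ} {R : ℝ} {s : Set ℂ}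
    (hs : s.Countable) (h : EqOn f g (sphere c |R| \ s)) :
    ∮ z in C(c, R), f z = ∮ z in C(c, R), g z := by
  rcases eq_or_ne R 0 with rfl | hR
  · simp only [circleIntegral.integral_radius_zero]
  refine intervalIntegral.integral_congr_ae (((hs.preimage_circleMap c hR).ae_notMem _).mono
    fun θ hθ _ => ?_)
  simp only [h ⟨circleMap_mem_sphere' c R θ, hθ⟩]

theorem circleIntegral_comp_inv (f : ℂ → E) :
    ∮ z in C(0, 1), f z = ∮ z in C(0, 1), (z ^ 2)⁻¹ • f z⁻¹ := by
  set b : ℝ → E := fun θ => deriv (circleMap 0 1) θ • f (circleMap 0 1 θ)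
  have hb : Function.Periodic b (2 * Real.pi) := fun θ => by
    simp only [b, deriv_circleMap, (periodic_circleMap 0 1) θ]
  have hinv : ∀ θ, (circleMap 0 1 θ)⁻¹ = circleMap 0 1 (-θ) := fun θ => by
    simp [circleMap, ← Complex.exp_neg]
  have hne : ∀ θ, circleMap 0 1 θ ≠ 0 := fun θ => by simp [circleMap, Complex.exp_ne_zero]
  calc ∮ z in C(0, 1), f z = ∫ θ in -(2 * Real.pi)..0, b θ := by
        have := hb.intervalIntegral_add_eq (-(2 * Real.pi)) 0
        rw [neg_add_cancel, zero_add] at this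
        exact this.symm
    _ = ∫ θ in 0..2 * Real.pi, b (-θ) := by
        rw [intervalIntegral.integral_comp_neg, neg_zero]
    _ = ∮ z in C(0, 1), (z ^ 2)⁻¹ • f z⁻¹ := by
        refine intervalIntegral.integral_congr fun θ _ => ?_
        simp only [b, deriv_circleMap, smul_smul, ← hinv]
        congr 1
        field_simp [hne θ]

theorem circleIntegral_eq_zero_of_eqOn_off_countable [CompleteSpace E] {f g : ℂ → E} {c : ℂ}
    {R : ℝ} {s U : Set ℂ} (hR : 0 ≤ R) (hs : s.Countable) (h : EqOn f g (sphere c R \ s))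
    (hg : DifferentiableOn ℂ g U) (hU : closedBall c R ⊆ U) :
    ∮ z in C(c, R), f z = 0 := by
  rw [circleIntegral_congr_of_countable hs (abs_of_nonneg hR ▸ h)]
  exact (hg.diffContOnCl_ball hU).circleIntegral_eq_zero hR

end CircleIntegral

theorem isUnit_of_mem_ball_of_eq_comp_inv {M : Type*} [Monoid M] {r : ℝ} {F Fext : ℂ → M}
    (hF : ∀ z : ℂ, r < ‖z‖ → IsUnit (F z))
    (hFext_eq : ∀ t ∈ ball (0 : ℂ) r⁻¹, t ≠ 0 → Fext t = F t⁻¹) (hFext0 : IsUnit (Fext 0))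
    {t : ℂ} (ht : t ∈ ball (0 : ℂ) r⁻¹) : IsUnit (Fext t) := by
  rcases eq_or_ne t 0 with rfl | ht0
  · exact hFext0
  · exact hFext_eq t ht ht0 ▸ hF _ (lt_norm_inv_of_mem_ball ht ht0)

theorem exterior_cauchyPlemelj_annihilates_exterior_analytic_general
    (N : ℕ) (r : ℝ) (hr0 : 0 < r) (hr1 : r < 1)
    (Ψ : ℂ → Matrix (Fin N) (Fin N) ℂ)
    (hinv : ∀ z : ℂ, r < ‖z‖ → IsUnit (Ψ z))
    (Ψext : ℂ → Matrix (Fin N) (Fin N) ℂ)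
    (hΨext : ∀ i j, AnalyticOnNhd ℂ (fun t => Ψext t i j) (Metric.ball (0 : ℂ) r⁻¹))
    (hΨext_eq : ∀ t ∈ Metric.ball (0 : ℂ) r⁻¹, t ≠ 0 → Ψext t = Ψ t⁻¹)
    (hΨext0 : IsUnit (Ψext 0))
    (g : ℂ → Fin N → ℂ)
    (gext : ℂ → Fin N → ℂ)
    (hgext : ∀ i, AnalyticOnNhd ℂ (fun t => gext t i) (Metric.ball (0 : ℂ) r⁻¹))
    (hgext_eq : ∀ t ∈ Metric.ball (0 : ℂ) r⁻¹, t ≠ 0 → gext t = g t⁻¹)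
    (hgext0 : gext 0 = 0)
    (G : ℂ → ℂ → Matrix (Fin N) (Fin N) ℂ)
    (hG1 : ∀ z z' : ℂ, r < ‖z‖ → r < ‖z'‖ → z ≠ z' →
      G z z' = (z - z')⁻¹ • (Ψ z * (Ψ z')⁻¹ - 1)) :
    ∀ z₀ : ℂ, ‖z₀‖ = 1 →
      (∮ w in C(0, 1), (G z₀ w).mulVec (g w)) = 0 := by
  intro z₀ hz₀
  have hz₀0 : z₀ ≠ 0 := norm_ne_zero_iff.1 (hz₀ ▸ one_ne_zero)
  have hdisk : closedBall (0 : ℂ) 1 ⊆ ball 0 r⁻¹ :=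
    closedBall_subset_ball ((one_lt_inv₀ hr0).2 hr1)
  have hz₀B : z₀⁻¹ ∈ ball (0 : ℂ) r⁻¹ := hdisk (by simp [hz₀])
  set K : ℂ → Fin N → ℂ := fun t => (Ψ z₀ * (Ψext t)⁻¹ - 1) *ᵥ gext t
  have hK : DifferentiableOn ℂ K (ball 0 r⁻¹) :=
    .matrix_mul_inv_sub_one_mulVec _ (fun i j => (hΨext i j).differentiableOn)
      (fun _ ht => isUnit_of_mem_ball_of_eq_comp_inv hinv hΨext_eq hΨext0 ht)
      (differentiableOn_pi.2 fun i => (hgext i).differentiableOn)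
  have hK0 : K 0 = 0 := by simp only [K, hgext0, mulVec_zero]
  have hKz₀ : K z₀⁻¹ = 0 := by
    have hΨz₀ : Ψext z₀⁻¹ = Ψ z₀ := by
      rw [hΨext_eq _ hz₀B (inv_ne_zero hz₀0), inv_inv]
    simp only [K, hΨz₀, mul_nonsing_inv _ ((isUnit_iff_isUnit_det _).1 (hinv z₀ (hz₀ ▸ hr1))),
      sub_self, zero_mulVec]
  have hH : DifferentiableOn ℂ (z₀⁻¹ • dslope (dslope K 0) z₀⁻¹) (ball 0 r⁻¹) :=
    ((Complex.differentiableOn_dslope (isOpen_ball.mem_nhds hz₀B)).2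
      ((Complex.differentiableOn_dslope (isOpen_ball.mem_nhds (mem_ball_self (by positivity)))).2
        hK)).const_smul _
  rw [circleIntegral_comp_inv]
  refine circleIntegral_eq_zero_of_eqOn_off_countable zero_le_one (countable_singleton z₀⁻¹) ?_
    hH hdisk
  rintro t ⟨ht, htz₀ : t ≠ z₀⁻¹⟩
  have ht1 : ‖t‖ = 1 := by simpa using ht
  have ht0 : t ≠ 0 := norm_ne_zero_iff.1 (ht1 ▸ one_ne_zero)
  have htB : t ∈ ball (0 : ℂ) r⁻¹ := hdisk (by simp [ht1])
  have hz₀t : z₀ ≠ t⁻¹ := fun h => htz₀ (by rw [h, inv_inv])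
  simp only [Pi.smul_apply]
  rw [hG1 z₀ t⁻¹ (hz₀ ▸ hr1) (by simpa [ht1] using hr1) hz₀t, smul_mulVec,
    dslope_dslope_of_ne (inv_ne_zero hz₀0).symm hK0 hKz₀ ht0 htz₀, smul_smul, smul_smul]
  simp only [K, sub_zero, ← hΨext_eq t htB ht0, ← hgext_eq t htB ht0]
  congr 1
  field_simp

/-- The exterior Cauchy–Plemelj operator with kernel
`G(z,z') = (Ψ(z)Ψ(z')⁻¹ - 1)/(z - z')` annihilates boundary values of functions
analytic outside the unit circle that vanish at infinity. -/
theorem exterior_cauchyPlemelj_annihilates_exterior_analytic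
    (N : ℕ) (r : ℝ) (hr0 : 0 < r) (hr1 : r < 1)
    (Ψ : ℂ → Matrix (Fin N) (Fin N) ℂ)
    (hΨ : ∀ i j, AnalyticOnNhd ℂ (fun z => Ψ z i j) {z : ℂ | r < ‖z‖})
    (hinv : ∀ z : ℂ, r < ‖z‖ → IsUnit (Ψ z))
    (Ψext : ℂ → Matrix (Fin N) (Fin N) ℂ)
    (hΨext : ∀ i j, AnalyticOnNhd ℂ (fun t => Ψext t i j) (Metric.ball (0 : ℂ) r⁻¹))
    (hΨext_eq : ∀ t ∈ Metric.ball (0 : ℂ) r⁻¹, t ≠ 0 → Ψext t = Ψ t⁻¹)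
    (hΨext0 : IsUnit (Ψext 0))
    (g : ℂ → Fin N → ℂ)
    (hg : ∀ i, AnalyticOnNhd ℂ (fun z => g z i) {z : ℂ | r < ‖z‖})
    (gext : ℂ → Fin N → ℂ)
    (hgext : ∀ i, AnalyticOnNhd ℂ (fun t => gext t i) (Metric.ball (0 : ℂ) r⁻¹))
    (hgext_eq : ∀ t ∈ Metric.ball (0 : ℂ) r⁻¹, t ≠ 0 → gext t = g t⁻¹)
    (hgext0 : gext 0 = 0)
    (G : ℂ → ℂ → Matrix (Fin N) (Fin N) ℂ)
    (hG1 : ∀ z z' : ℂ, r < ‖z‖ → r < ‖z'‖ → z ≠ z' →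
      G z z' = (z - z')⁻¹ • (Ψ z * (Ψ z')⁻¹ - 1))
    (hG2 : ∀ z : ℂ, r < ‖z‖ →
      G z z = (Matrix.of fun i j => deriv (fun w => Ψ w i j) z) * (Ψ z)⁻¹) :
    ∀ z₀ : ℂ, ‖z₀‖ = 1 →
      (∮ w in C(0, 1), (G z₀ w).mulVec (g w)) = 0 :=
  exterior_cauchyPlemelj_annihilates_exterior_analytic_general N r hr0 hr1 Ψ hinv Ψext hΨext
    hΨext_eq hΨext0 g gext hgext hgext_eq hgext0 G hG1
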